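/- For the uniform multi-touch attribution rule and the impression adjacency relation with post-attribution contribution bound enforcement, the configuration is invalid: for every constant C₀ > 0 there exist adjacent datasets D and D' (differing by one impression) such that with contribution bound r = 1, the resulting attributed datasets satisfy ‖attr(D) - attr(D')‖₁ > C₀. Concretely, for any p ≥ 2 there exist adjacent datasets for which ‖attr(D) - attr(D')‖₁ ≥ 2 ln(p/2). -/

import Mathlib

/-! Framework for differentially private ad conversion measurement
(Delaney et al., "Differentially Private Ad Conversion Measurement"). -/

structure Impression where
  time : ℕ
  user : ℕ
  pub : ℕ
  adv : ℕ
  id : ℕ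
deriving DecidableEq

structure Conversion where
  time : ℕ
  user : ℕ
  adv : ℕ
  id : ℕ
deriving DecidableEq

structure Dataset where
  imps : List Impression
  convs : List Conversion

/-- An attribution rule maps a time-ordered list of impressions and a conversion
to a list of credits (one per impression). -/
abbrev AttrRule := List Impression → Conversion → List ℝ

/-- A valid attribution rule outputs one nonnegative weight per impression, summing to 1. -/
def ValidRule (a : AttrRule) : Prop :=
  ∀ is c, is ≠ [] →
    (a is c).length = is.length ∧ (a is c).sum = 1 ∧ ∀ w ∈ a is c, (0 : ℝ) ≤ w

/-- Impressions eligible for attribution of conversion `c`: those occurring earlier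
with the same user and advertiser. -/
def eligible (D : Dataset) (c : Conversion) : List Impression :=
  D.imps.filter fun i => decide (i.time < c.time ∧ i.user = c.user ∧ i.adv = c.adv)

/-- ℓ₁ distance between attributed datasets. -/
noncomputable def l1dist (w w' : (Impression × Conversion) →₀ ℝ) : ℝ :=
  (w - w').sum fun _ v => |v|

/-- Impressions and conversions are listed in time order. -/
def SortedDS (D : Dataset) : Prop :=
  D.imps.Pairwise (fun i j => i.time ≤ j.time) ∧
  D.convs.Pairwise (fun c c' => c.time ≤ c'.time)

/-- Inner loop of post-attribution contribution-bound enforcement: each weighted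
(impression, conversion) pair is kept only if the remaining bound of its scope covers
the weight, in which case the weight is deducted. -/
noncomputable def applyPairs {σ : Type} [DecidableEq σ] (s : Impression → σ) (c : Conversion) :
    List (Impression × ℝ) → (σ → ℝ) × ((Impression × Conversion) →₀ ℝ) →
      (σ → ℝ) × ((Impression × Conversion) →₀ ℝ)
  | [], st => st
  | (i, w) :: rest, st =>
      if w ≤ st.1 (s i) then
        applyPairs s c rest
          (Function.update st.1 (s i) (st.1 (s i) - w), st.2 + Finsupp.single (i, c) w)
      else
        applyPairs s c rest st

/-- Attribution with post-attribution contribution bound enforcement (Algorithm 1),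
with contribution bounding scope map `s` and contribution bound `r`. -/
noncomputable def postAttr {σ : Type} [DecidableEq σ] (a : AttrRule) (s : Impression → σ)
    (r : ℝ) (D : Dataset) : (Impression × Conversion) →₀ ℝ :=
  (D.convs.foldl
    (fun st c => applyPairs s c ((eligible D c).zip (a (eligible D c) c)) st)
    ((fun _ => r : σ → ℝ), (0 : (Impression × Conversion) →₀ ℝ))).2

/-- Attribution with pre-attribution contribution bound enforcement (Algorithm 2):
for each conversion, every scope with an eligible impression pays one unit of its bound
if available, otherwise its impressions are excluded from attribution. -/
noncomputable def preAttr {σ : Type} [DecidableEq σ] (a : AttrRule) (s : Impression → σ)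
    (r : ℝ) (D : Dataset) : (Impression × Conversion) →₀ ℝ :=
  (D.convs.foldl
    (fun (st : (σ → ℝ) × ((Impression × Conversion) →₀ ℝ)) c =>
      let el := eligible D c
      let surv := el.filter fun i => decide ((1 : ℝ) ≤ st.1 (s i))
      let scopes := (el.map s).dedup
      ((fun x => if x ∈ scopes ∧ (1 : ℝ) ≤ st.1 x then st.1 x - 1 else st.1 x : σ → ℝ),
        st.2 + ((surv.zip (a surv c)).map fun p => Finsupp.single (p.1, c) p.2).sum))
    ((fun _ => r : σ → ℝ), (0 : (Impression × Conversion) →₀ ℝ))).2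

/-- Attribution without any contribution bound enforcement. -/
noncomputable def attrNoCap (a : AttrRule) (D : Dataset) :
    (Impression × Conversion) →₀ ℝ :=
  (D.convs.map fun c =>
    (((eligible D c).zip (a (eligible D c) c)).map fun p => Finsupp.single (p.1, c) p.2).sum).sum

/-- Adjacency: `D'` results from `D` by adding a single impression (in time order). -/
def AddOneImpression (D D' : Dataset) : Prop :=
  ∃ (i0 : Impression) (l₁ l₂ : List Impression),
    D.imps = l₁ ++ l₂ ∧ D'.imps = l₁ ++ i0 :: l₂ ∧ D.convs = D'.convs

/-- Adjacency: `D` results from `D'` by removing all impressions whose scope (under `si`)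
is `v` and all conversions whose scope (under `sc`) is `v`. -/
def RemovesScope {σ : Type} [DecidableEq σ] (si : Impression → σ)
    (sc : Conversion → Option σ) (v : σ) (D D' : Dataset) : Prop :=
  D.imps = D'.imps.filter (fun i => decide (si i ≠ v)) ∧
  D.convs = D'.convs.filter (fun c => decide (sc c ≠ some v))

/-- First-touch attribution. -/
noncomputable def FTA : AttrRule := fun is _ =>
  match is with
  | [] => []
  | _ :: t => 1 :: t.map fun _ => 0

/-- Last-touch attribution. -/
noncomputable def LTA : AttrRule := fun is _ =>
  match is with
  | [] => []
  | _ :: _ => List.replicate (is.length - 1) 0 ++ [1]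

/-- Uniform multi-touch attribution. -/
noncomputable def UNI : AttrRule := fun is _ => is.map fun _ => ((is.length : ℝ))⁻¹

/-- U-shaped attribution. -/
noncomputable def USH : AttrRule := fun is _ =>
  match is with
  | [] => []
  | [_] => [1]
  | [_, _] => [0.5, 0.5]
  | _ :: _ :: _ :: _ =>
      (0.4 : ℝ) :: (List.replicate (is.length - 2) ((0.2 : ℝ) / ((is.length : ℝ) - 2)) ++ [0.4])

/-- Exponential time decay attribution with half-life `th`. -/
noncomputable def EXPR (th : ℝ) : AttrRule := fun is c =>
  let wt : Impression → ℝ := fun i => (2 : ℝ) ^ (-(((c.time : ℝ) - (i.time : ℝ)) / th))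
  is.map fun i => wt i / (is.map wt).sum

/-! In the staircase dataset `D'`, impressions `i₀, …, i_{p-1}` of one user and advertiser are
each followed by a block of conversions `c_{k,0}, …, c_{k,k}`. Under uniform attribution every
conversion of block `k` gives credit `1/(k+1)` to each of `i₀, …, i_k`; with bound `1` per
impression the earlier ones are already exhausted, so `i_k` alone absorbs all `k+1` credits.
Without `i₀` (dataset `D`) the credits in block `k ≥ 1` are `1/k`, so `i_k` is exhausted after `k`
conversions and the last conversion of the block is dropped. Block `k` therefore contributes
`2/(k+1)` to the ℓ₁ distance, except block `0` which contributes `1`; the total `2 H_p - 1`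
exceeds `2 log (p + 1) - 1`, which is at least `2 log (p / 2)` because `2 log 2 > 1`. -/

open Finset Filter

theorem Finsupp.sum_finset_sum_single_of_injective {ι α M N : Type*} [AddCommMonoid M]
    [AddCommMonoid N] {key : ι → α} (hkey : Function.Injective key) (s : Finset ι) (f : ι → M)
    {g : α → M → N} (hg : ∀ a, g a 0 = 0) :
    (∑ i ∈ s, Finsupp.single (key i) (f i)).sum g = ∑ i ∈ s, g (key i) (f i) := by
  classical
  have hsupp : (∑ i ∈ s, Finsupp.single (key i) (f i)).support ⊆ s.image key := by
    intro a ha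
    obtain ⟨i, hi, ha⟩ := mem_biUnion.mp (Finsupp.support_finsetSum ha)
    rw [mem_singleton.mp (Finsupp.support_single_subset ha)]
    exact mem_image_of_mem key hi
  rw [Finsupp.sum_of_support_subset _ hsupp g fun a _ => hg a, sum_image hkey.injOn]
  refine Finset.sum_congr rfl fun i hi => ?_
  simp [Finsupp.finsetSum_apply, Finsupp.single_apply, hkey.eq_iff, hi]

theorem List.filter_range'_lt {s n m : ℕ} (h : m ≤ s + n) :
    (List.range' s n).filter (fun j => decide (j < m)) = List.range' s (m - s) := by
  rw [← Nat.add_sub_of_le (show m - s ≤ n by omega), ← List.range'_append_1, List.filter_append,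
    List.filter_eq_self.mpr, List.filter_eq_nil_iff.mpr, List.append_nil]
  · intro j hj
    simp only [List.mem_range'_1] at hj
    simpa using by omega
  · intro j hj
    simp only [List.mem_range'_1] at hj
    simpa using by omega

theorem zip_UNI (l : List Impression) (c : Conversion) :
    l.zip (UNI l c) = l.map fun i => (i, ((l.length : ℝ))⁻¹) := by
  simpa [UNI] using List.zip_map' (f := id) (g := fun _ => ((l.length : ℝ))⁻¹) (l := l)

section applyPairs

variable {σ : Type} [DecidableEq σ] (s : Impression → σ)

theorem applyPairs_append (c : Conversion) (l₁ l₂ : List (Impression × ℝ))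
    (st : (σ → ℝ) × ((Impression × Conversion) →₀ ℝ)) :
    applyPairs s c (l₁ ++ l₂) st = applyPairs s c l₂ (applyPairs s c l₁ st) := by
  induction l₁ generalizing st with
  | nil => rfl
  | cons q l ih =>
    simp only [List.cons_append, applyPairs]
    split <;> apply ih

theorem applyPairs_of_forall_lt (c : Conversion) (l : List (Impression × ℝ))
    (st : (σ → ℝ) × ((Impression × Conversion) →₀ ℝ)) (h : ∀ q ∈ l, st.1 (s q.1) < q.2) :
    applyPairs s c l st = st := by
  induction l with
  | nil => rfl
  | cons q l ih =>
    rw [applyPairs, if_neg (h q List.mem_cons_self).not_ge]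
    exact ih fun q hq => h q (List.mem_cons_of_mem _ hq)

theorem applyPairs_append_singleton_of_forall_lt (c : Conversion) (l : List (Impression × ℝ))
    (i : Impression) (w : ℝ) (st : (σ → ℝ) × ((Impression × Conversion) →₀ ℝ))
    (h : ∀ q ∈ l, st.1 (s q.1) < q.2) (hw : w ≤ st.1 (s i)) :
    applyPairs s c (l ++ [(i, w)]) st =
      (Function.update st.1 (s i) (st.1 (s i) - w), st.2 + Finsupp.single (i, c) w) := by
  rw [applyPairs_append, applyPairs_of_forall_lt s c l st h, applyPairs, if_pos hw]
  rfl

variable (P : Conversion → List (Impression × ℝ))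

theorem foldl_applyPairs_of_forall_lt (cs : List Conversion)
    (st : (σ → ℝ) × ((Impression × Conversion) →₀ ℝ))
    (h : ∀ c ∈ cs, ∀ q ∈ P c, st.1 (s q.1) < q.2) :
    cs.foldl (fun st c => applyPairs s c (P c) st) st = st := by
  induction cs with
  | nil => rfl
  | cons c cs ih =>
    rw [List.foldl_cons, applyPairs_of_forall_lt s c _ st (h c List.mem_cons_self)]
    exact ih fun c hc => h c (List.mem_cons_of_mem _ hc)

theorem foldl_applyPairs_credit {l : List Impression} {x : Impression} {u : ℝ} (hu : 0 < u)
    (hlx : ∀ i ∈ l, s i ≠ s x) (cs : List Conversion)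
    (hP : ∀ c ∈ cs, P c = (l ++ [x]).map fun i => (i, u))
    (st : (σ → ℝ) × ((Impression × Conversion) →₀ ℝ)) (hl : ∀ i ∈ l, st.1 (s i) = 0)
    (hx : cs.length * u ≤ st.1 (s x)) :
    cs.foldl (fun st c => applyPairs s c (P c) st) st =
      (Function.update st.1 (s x) (st.1 (s x) - cs.length * u),
        st.2 + (cs.map fun c => Finsupp.single (x, c) u).sum) := by
  induction cs generalizing st with
  | nil => simp
  | cons c cs ih =>
    simp only [List.length_cons, Nat.cast_succ] at hx
    have hcs : (0 : ℝ) ≤ cs.length := cs.length.cast_nonneg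
    rw [List.foldl_cons, hP c List.mem_cons_self, List.map_append, List.map_singleton,
      applyPairs_append_singleton_of_forall_lt s c _ x u st
        (fun q hq => by obtain ⟨i, hi, rfl⟩ := List.mem_map.mp hq; simpa [hl i hi] using hu)
        (by nlinarith),
      ih (fun c hc => hP c (List.mem_cons_of_mem _ hc)) _
        (fun i hi => by simp [Function.update_of_ne (hlx i hi), hl i hi])
        (by simp only [Function.update_self]; linarith)]
    simp only [Function.update_idem, Function.update_self, List.length_cons, Nat.cast_succ,
      List.map_cons, List.sum_cons, add_assoc]
    congr 2
    ring

theorem foldl_applyPairs_exhaust {l : List Impression} {x : Impression} {u : ℝ} (hu : 0 < u)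
    (hlx : ∀ i ∈ l, s i ≠ s x) (cs₁ cs₂ : List Conversion)
    (hP : ∀ c ∈ cs₁ ++ cs₂, P c = (l ++ [x]).map fun i => (i, u))
    (st : (σ → ℝ) × ((Impression × Conversion) →₀ ℝ)) (hl : ∀ i ∈ l, st.1 (s i) = 0)
    (hx : cs₁.length * u = st.1 (s x)) :
    (cs₁ ++ cs₂).foldl (fun st c => applyPairs s c (P c) st) st =
      (Function.update st.1 (s x) 0, st.2 + (cs₁.map fun c => Finsupp.single (x, c) u).sum) := by
  rw [List.foldl_append, foldl_applyPairs_credit s P hu hlx cs₁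
    (fun c hc => hP c (List.mem_append_left _ hc)) st hl hx.le, ← hx, sub_self]
  refine foldl_applyPairs_of_forall_lt s P cs₂ _ fun c hc q hq => ?_
  rw [hP c (List.mem_append_right _ hc)] at hq
  obtain ⟨i, hi, rfl⟩ := List.mem_map.mp hq
  rcases List.mem_append.mp hi with hi | hi
  · simpa [Function.update_of_ne (hlx i hi), hl i hi] using hu
  · simpa [List.mem_singleton.mp hi] using hu

end applyPairs

namespace Staircase

def imp (j : ℕ) : Impression := ⟨2 * j, 0, 0, 0, j⟩

def conv (k t : ℕ) : Conversion := ⟨2 * k + 1, 0, 0, t⟩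

def block (k : ℕ) : List Conversion := (List.range (k + 1)).map (conv k)

/-- `dataset m p` keeps the impressions `i_m, …, i_{p-1}`: `dataset 0 p` and `dataset 1 p` are the
datasets `D'` and `D` of the paper, indexed from `0`. -/
def dataset (m p : ℕ) : Dataset :=
  ⟨(List.range' m (p - m)).map imp, (List.range p).flatMap block⟩

theorem imp_injective : Function.Injective imp := fun _ _ h => congrArg Impression.id h

theorem eligible_dataset_conv {m p k : ℕ} (hk : k < p) (t : ℕ) :
    eligible (dataset m p) (conv k t) = (List.range' m (k + 1 - m)).map imp := by
  rw [eligible, dataset, List.filter_map,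
    ← List.filter_range'_lt (s := m) (n := p - m) (m := k + 1) (by omega)]
  congr 1
  refine List.filter_congr fun j _ => ?_
  simp [imp, conv]

theorem zip_UNI_eligible_of_mem_block {m p k : ℕ} (hk : k < p) {c : Conversion}
    (hc : c ∈ block k) :
    (eligible (dataset m p) c).zip (UNI (eligible (dataset m p) c) c) =
      ((List.range' m (k + 1 - m)).map imp).map fun i => (i, ((k + 1 - m : ℕ) : ℝ)⁻¹) := by
  obtain ⟨t, -, rfl⟩ := List.mem_map.mp hc
  rw [eligible_dataset_conv hk, zip_UNI, List.length_map, List.length_range']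

theorem foldl_block_of_lt {m p k : ℕ} (hk : k < p) (hkm : k < m)
    (st : (Impression → ℝ) × ((Impression × Conversion) →₀ ℝ)) :
    (block k).foldl (fun st c => applyPairs (fun i => i) c
      ((eligible (dataset m p) c).zip (UNI (eligible (dataset m p) c) c)) st) st = st := by
  refine foldl_applyPairs_of_forall_lt _ _ _ _ fun c hc q hq => ?_
  rw [zip_UNI_eligible_of_mem_block hk hc, Nat.sub_eq_zero_of_le hkm] at hq
  simp at hq

theorem foldl_block_of_le {m p k : ℕ} (hk : k < p) (hmk : m ≤ k) (β : Impression → ℝ)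
    (W : (Impression × Conversion) →₀ ℝ) (hβ0 : ∀ j, m ≤ j → j < k → β (imp j) = 0)
    (hβ1 : β (imp k) = 1) :
    (block k).foldl (fun st c => applyPairs (fun i => i) c
      ((eligible (dataset m p) c).zip (UNI (eligible (dataset m p) c) c)) st) (β, W) =
      (Function.update β (imp k) 0,
        W + ∑ t ∈ range (k + 1 - m), Finsupp.single (imp k, conv k t) ((k + 1 - m : ℕ) : ℝ)⁻¹) := by
  obtain ⟨cs₂, hblock⟩ : ∃ cs₂, block k = (List.range (k + 1 - m)).map (conv k) ++ cs₂ :=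
    ⟨_, by conv_lhs => rw [block, ← Nat.sub_add_cancel (show m ≤ k + 1 by omega),
      List.range_add, List.map_append]⟩
  have hl : List.range' m (k + 1 - m) = List.range' m (k - m) ++ [k] := by
    rw [show k + 1 - m = k - m + 1 by omega, List.range'_1_concat, Nat.add_sub_cancel' hmk]
  have hpos : (0 : ℝ) < (k + 1 - m : ℕ) := by norm_cast; omega
  rw [hblock, foldl_applyPairs_exhaust (fun i => i) _ (l := (List.range' m (k - m)).map imp)
    (x := imp k) (inv_pos.mpr hpos) ?_ _ _ ?_ _ ?_ ?_]
  · simp only [List.map_map]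
    rfl
  · intro i hi
    obtain ⟨j, hj, rfl⟩ := List.mem_map.mp hi
    simp only [List.mem_range'_1] at hj
    exact imp_injective.ne (by omega)
  · intro c hc
    rw [zip_UNI_eligible_of_mem_block hk (hblock ▸ hc), hl, List.map_append, List.map_singleton]
  · intro i hi
    obtain ⟨j, hj, rfl⟩ := List.mem_map.mp hi
    simp only [List.mem_range'_1] at hj
    exact hβ0 j (by omega) (by omega)
  · rw [List.length_map, List.length_range, mul_inv_cancel₀ hpos.ne']
    exact hβ1.symm

noncomputable def credits (m k : ℕ) : (Impression × Conversion) →₀ ℝ :=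
  ∑ k' ∈ range k, ∑ t ∈ range (k' + 1 - m),
    Finsupp.single (imp k', conv k' t) ((k' + 1 - m : ℕ) : ℝ)⁻¹

theorem foldl_postAttr_blocks (m p : ℕ) {k : ℕ} (hk : k ≤ p) : ∃ β : Impression → ℝ,
    (∀ j, m ≤ j → j < k → β (imp j) = 0) ∧ (∀ j, k ≤ j → β (imp j) = 1) ∧
    ((List.range k).flatMap block).foldl
      (fun st c => applyPairs (fun i => i) c
        ((eligible (dataset m p) c).zip (UNI (eligible (dataset m p) c) c)) st)
      ((fun _ => 1), 0) = (β, credits m k) := by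
  induction k with
  | zero => exact ⟨fun _ => 1, fun _ _ h => absurd h (Nat.not_lt_zero _), fun _ _ => rfl, rfl⟩
  | succ k ih =>
    obtain ⟨β, hβ0, hβ1, hfold⟩ := ih (by omega)
    rw [List.range_succ, List.flatMap_append, List.foldl_append, hfold, List.flatMap_singleton,
      credits, credits, sum_range_succ]
    rcases lt_or_ge k m with hkm | hmk
    · refine ⟨β, fun j h1 h2 => hβ0 j h1 (by omega), fun j hj => hβ1 j (by omega), ?_⟩
      rw [foldl_block_of_lt hk hkm, Nat.sub_eq_zero_of_le hkm, sum_range_zero, add_zero]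
    · refine ⟨Function.update β (imp k) 0, fun j h1 h2 => ?_, fun j hj => ?_,
        foldl_block_of_le hk hmk β _ hβ0 (hβ1 k le_rfl)⟩
      · rcases (Nat.lt_succ_iff.mp h2).eq_or_lt with rfl | h2
        · exact Function.update_self _ _ _
        · rw [Function.update_of_ne (imp_injective.ne h2.ne), hβ0 j h1 h2]
      · rw [Function.update_of_ne (imp_injective.ne (by omega)), hβ1 j (by omega)]

theorem postAttr_dataset (m p : ℕ) :
    postAttr UNI (fun i => i) 1 (dataset m p) = credits m p :=
  congrArg Prod.snd (foldl_postAttr_blocks m p le_rfl).choose_spec.2.2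

theorem postAttr_dataset_one_sub_zero (p : ℕ) :
    postAttr UNI (fun i => i) 1 (dataset 1 p) - postAttr UNI (fun i => i) 1 (dataset 0 p) =
      ∑ k ∈ range p, ∑ t ∈ range (k + 1), Finsupp.single (imp k, conv k t)
        ((if t < k then (k : ℝ)⁻¹ else 0) - ((k : ℝ) + 1)⁻¹) := by
  rw [postAttr_dataset, postAttr_dataset, credits, credits, ← sum_sub_distrib]
  refine sum_congr rfl fun k _ => ?_
  have htrunc : ∑ t ∈ range (k + 1),
      Finsupp.single (imp k, conv k t) (if t < k then (k : ℝ)⁻¹ else 0) =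
        ∑ t ∈ range k, Finsupp.single (imp k, conv k t) (k : ℝ)⁻¹ := by
    rw [sum_range_succ, if_neg (lt_irrefl k), Finsupp.single_zero, add_zero]
    exact sum_congr rfl fun t ht => by rw [if_pos (mem_range.mp ht)]
  simp only [Finsupp.single_sub, sum_sub_distrib, htrunc, Nat.add_sub_cancel, Nat.sub_zero,
    Nat.cast_succ]

theorem sum_abs_credit_gap (k : ℕ) :
    ∑ t ∈ range (k + 1), |(if t < k then (k : ℝ)⁻¹ else 0) - ((k : ℝ) + 1)⁻¹| =
      2 * ((k : ℝ) + 1)⁻¹ - if k = 0 then 1 else 0 := by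
  rw [sum_range_succ, if_neg (lt_irrefl k),
    sum_congr rfl fun t ht => by rw [if_pos (mem_range.mp ht)], sum_const, card_range,
    nsmul_eq_mul, zero_sub, abs_neg]
  rcases k.eq_zero_or_pos with rfl | hk
  · norm_num
  · have hk' : (0 : ℝ) < k := by exact_mod_cast hk
    rw [if_neg hk.ne', abs_of_nonneg (sub_nonneg.mpr (inv_anti₀ hk' (by linarith))),
      abs_of_pos (by positivity)]
    field_simp
    ring

theorem l1dist_postAttr_dataset {p : ℕ} (hp : 1 ≤ p) :
    l1dist (postAttr UNI (fun i => i) 1 (dataset 1 p)) (postAttr UNI (fun i => i) 1 (dataset 0 p))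
      = 2 * (harmonic p : ℝ) - 1 := by
  have hkey : Function.Injective fun x : (_ : ℕ) × ℕ => (imp x.1, conv x.1 x.2) := by
    rintro ⟨k, t⟩ ⟨k', t'⟩ h
    obtain rfl : k = k' := congrArg (fun q : Impression × Conversion => q.1.id) h
    obtain rfl : t = t' := congrArg (fun q : Impression × Conversion => q.2.id) h
    rfl
  rw [l1dist, postAttr_dataset_one_sub_zero, sum_sigma',
    Finsupp.sum_finset_sum_single_of_injective hkey _ _ fun _ => abs_zero, sum_sigma,
    sum_congr rfl fun k _ => sum_abs_credit_gap k, sum_sub_distrib, ← mul_sum, sum_ite_eq',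
    if_pos (mem_range.mpr hp)]
  push_cast [harmonic]
  ring

theorem addOneImpression_dataset {p : ℕ} (hp : 1 ≤ p) :
    AddOneImpression (dataset 1 p) (dataset 0 p) := by
  refine ⟨imp 0, [], (List.range' 1 (p - 1)).map imp, rfl, ?_, rfl⟩
  obtain ⟨n, rfl⟩ := Nat.exists_eq_add_of_le' hp
  simp [dataset, List.range'_succ]

theorem sortedDS_dataset (m p : ℕ) : SortedDS (dataset m p) := by
  refine ⟨List.pairwise_map.mpr ((List.pairwise_lt_range' ..).imp fun h => ?_), ?_⟩
  · simp only [imp]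
    omega
  · simp only [dataset, List.pairwise_flatMap, block, List.pairwise_map]
    refine ⟨fun k _ => List.pairwise_of_forall fun _ _ => le_rfl,
      List.pairwise_lt_range.imp fun h c hc c' hc' => ?_⟩
    obtain ⟨t, -, rfl⟩ := List.mem_map.mp hc
    obtain ⟨t', -, rfl⟩ := List.mem_map.mp hc'
    simp only [conv]
    omega

end Staircase

theorem two_mul_log_div_two_le_harmonic {p : ℕ} (hp : 1 ≤ p) :
    2 * Real.log (p / 2) ≤ 2 * (harmonic p : ℝ) - 1 := by
  have hp' : (1 : ℝ) ≤ p := by exact_mod_cast hp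
  have hmono : Real.log p ≤ Real.log (p + 1) := Real.log_le_log (by positivity) (by linarith)
  have hharm := log_add_one_le_harmonic p
  have hlog2 := Real.log_two_gt_d9
  rw [Real.log_div (by positivity) two_ne_zero]
  push_cast at hharm
  linarith

/-- Theorem A.7: for uniform multi-touch attribution, the impression adjacency relation
with post-attribution enforcement is invalid: with bound `r = 1`, the ℓ₁-distance between
the attributed datasets of adjacent datasets exceeds any constant `C₀`; concretely, for
every `p ≥ 2` there are adjacent datasets at distance at least `2 ln(p/2)`. -/
theorem post_attr_impression_uni_invalid :
    (∀ C₀ : ℝ, 0 < C₀ → ∃ D D' : Dataset, AddOneImpression D D' ∧ SortedDS D' ∧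
      C₀ < l1dist (postAttr UNI (fun i => i) 1 D) (postAttr UNI (fun i => i) 1 D')) ∧
    (∀ p : ℕ, 2 ≤ p → ∃ D D' : Dataset, AddOneImpression D D' ∧ SortedDS D' ∧
      2 * Real.log ((p : ℝ) / 2) ≤
        l1dist (postAttr UNI (fun i => i) 1 D) (postAttr UNI (fun i => i) 1 D')) := by
  have hbound : ∀ p : ℕ, 2 ≤ p → ∃ D D' : Dataset, AddOneImpression D D' ∧ SortedDS D' ∧
      2 * Real.log ((p : ℝ) / 2) ≤
        l1dist (postAttr UNI (fun i => i) 1 D) (postAttr UNI (fun i => i) 1 D') := by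
    intro p hp
    refine ⟨Staircase.dataset 1 p, Staircase.dataset 0 p,
      Staircase.addOneImpression_dataset (by omega), Staircase.sortedDS_dataset 0 p, ?_⟩
    rw [Staircase.l1dist_postAttr_dataset (by omega)]
    exact two_mul_log_div_two_le_harmonic (by omega)
  refine ⟨fun C₀ _ => ?_, hbound⟩
  have hlim : Tendsto (fun p : ℕ => 2 * Real.log ((p : ℝ) / 2)) atTop atTop :=
    (Real.tendsto_log_atTop.comp
      (tendsto_natCast_atTop_atTop.atTop_div_const two_pos)).const_mul_atTop two_pos
  obtain ⟨p, hC, hp⟩ := ((hlim.eventually_gt_atTop C₀).and (eventually_ge_atTop 2)).exists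
  obtain ⟨D, D', hadj, hsort, hlog⟩ := hbound p hp
  exact ⟨D, D', hadj, hsort, hC.trans_le hlog⟩
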